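/- arXiv:2005.08034 — 2 statements merged into one kernel-verified Lean document; each statement's English description precedes it below -/
import Mathlib

section
/- Let (V, ω) be a 2n-dimensional symplectic vector space and α, β, γ Lagrangian subspaces. The coindex of the associated quadratic form Q is invariant under cyclic permutation of its arguments: n₊ Q(α, β, γ) = n₊ Q(β, γ, α) = n₊ Q(γ, α, β). -/
/-- The coindex (number of positive squares) of a real-valued form `q` restricted to a
subspace `S`: the largest dimension of a subspace of `S` on which `q` is positive definite. -/
noncomputable def posIndex {V : Type*} [AddCommGroup V] [Module ℝ V]
    (q : V → ℝ) (S : Submodule ℝ V) : ℕ :=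
  sSup {k : ℕ | ∃ W : Submodule ℝ V, W ≤ S ∧ Module.finrank ℝ W = k ∧
    ∀ v ∈ W, v ≠ 0 → 0 < q v}


/-- A linear projection-like map: `π v ∈ β` always, and for `v ∈ β ⊔ γ`, `v - π v ∈ γ`. -/
lemma exists_proj_aux {V : Type*} [AddCommGroup V] [Module ℝ V]
    (β γ : Submodule ℝ V) :
    ∃ π : V →ₗ[ℝ] V, (∀ v, π v ∈ β) ∧ (∀ v ∈ β ⊔ γ, v - π v ∈ γ) := by
  obtain ⟨e, he⟩ := Submodule.exists_isCompl ((β ⊓ γ).comap γ.subtype)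
  set δ : Submodule ℝ V := e.map γ.subtype with hδ
  obtain ⟨ε, hε⟩ := Submodule.exists_isCompl (β ⊔ δ)
  have hcompl : IsCompl β (δ ⊔ ε) := by
    constructor
    · rw [disjoint_iff_inf_le]
      rintro x ⟨hxβ, hxδε⟩
      obtain ⟨d, hd, z, hz, rfl⟩ := Submodule.mem_sup.mp hxδε
      have hzmem : z ∈ (β ⊔ δ) ⊓ ε := by
        constructor
        · have : z = (d + z) - d := by abel
          rw [this]
          exact Submodule.sub_mem _ (Submodule.mem_sup_left hxβ) (Submodule.mem_sup_right hd)
        · exact hz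
      have hz0 : z = 0 := by
        have := hε.disjoint
        rw [disjoint_iff_inf_le] at this
        simpa using this hzmem
      subst hz0
      have hdβγ : d ∈ β ⊓ γ := by
        constructor
        · simpa using hxβ
        · exact Submodule.map_subtype_le γ e hd
      obtain ⟨d', hd', rfl⟩ := hd
      have hd'mem : d' ∈ (β ⊓ γ).comap γ.subtype ⊓ e := ⟨by simpa using hdβγ, hd'⟩
      have : d' = 0 := by
        have h2 := he.disjoint
        rw [disjoint_iff_inf_le] at h2
        simpa using h2 hd'mem
      simp [this]
    · rw [codisjoint_iff]
      rw [← sup_assoc]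
      exact hε.codisjoint.eq_top
  refine ⟨β.subtype.comp (β.linearProjOfIsCompl (δ ⊔ ε) hcompl), fun v => (β.linearProjOfIsCompl (δ ⊔ ε) hcompl v).2, ?_⟩
  intro v hv
  obtain ⟨b, hb, c, hc, rfl⟩ := Submodule.mem_sup.mp hv
  have hct : (⟨c, hc⟩ : γ) ∈ (⊤ : Submodule ℝ γ) := trivial
  rw [← he.codisjoint.eq_top] at hct
  obtain ⟨x, hx, y, hy, hxy⟩ := Submodule.mem_sup.mp hct
  have hceq : c = (x : V) + (y : V) := by
    have := congrArg (γ.subtype) hxy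
    simpa using this.symm
  have hxβ : (x : V) ∈ β := (Submodule.mem_comap.mp hx).1
  have hyδ : (y : V) ∈ δ := ⟨y, hy, rfl⟩
  have key : b + c = ((b + x : V)) + (y : V) := by rw [hceq]; abel
  have hproj : β.linearProjOfIsCompl (δ ⊔ ε) hcompl (b + c) = ⟨b + x, Submodule.add_mem β hb hxβ⟩ := by
    rw [key, map_add]
    have h1 : β.linearProjOfIsCompl (δ ⊔ ε) hcompl ((b : V) + x) =
        ⟨b + x, Submodule.add_mem β hb hxβ⟩ :=
      Submodule.linearProjOfIsCompl_apply_left hcompl ⟨b + x, Submodule.add_mem β hb hxβ⟩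
    have h2 : β.linearProjOfIsCompl (δ ⊔ ε) hcompl (y : V) = 0 :=
      Submodule.linearProjOfIsCompl_apply_right hcompl ⟨y, Submodule.mem_sup_left hyδ⟩
    rw [h1, h2, add_zero]
  simp only [LinearMap.comp_apply, hproj, Submodule.coe_subtype]
  have : (b + c) - ((b : V) + x) = (y : V) := by rw [hceq]; abel
  rw [this]
  exact Submodule.map_subtype_le γ e hyδ

lemma posIndex_key {V : Type*} [AddCommGroup V] [Module ℝ V] [FiniteDimensional ℝ V]
    (ω : V →ₗ[ℝ] V →ₗ[ℝ] ℝ) (halt : ∀ v, ω v v = 0)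
    (α β γ : Submodule ℝ V) (q₁ q₂ : V → ℝ)
    (hq₁ : ∀ vβ ∈ β, ∀ vγ ∈ γ, q₁ (vβ + vγ) = ω vβ vγ)
    (hq₂ : ∀ vγ ∈ γ, ∀ vα ∈ α, q₂ (vγ + vα) = ω vγ vα) :
    posIndex q₁ (α ⊓ (β ⊔ γ)) ≤ posIndex q₂ (β ⊓ (γ ⊔ α)) := by
  obtain ⟨π, hπβ, hπγ⟩ := exists_proj_aux β γ
  have hskew : ∀ x y, ω x y = - ω y x := by
    intro x y
    have h := halt (x + y)
    simp only [map_add, LinearMap.add_apply, halt] at h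
    linarith
  have hq₂zero : q₂ 0 = 0 := by
    have := hq₂ 0 (Submodule.zero_mem γ) 0 (Submodule.zero_mem α)
    simpa using this
  -- main transfer: for v ∈ α ⊓ (β ⊔ γ), q₂ (π v) = q₁ v
  have htrans : ∀ v ∈ α ⊓ (β ⊔ γ), q₂ (π v) = q₁ v := by
    rintro v ⟨hvα, hvβγ⟩
    have h1 : v - π v ∈ γ := hπγ v hvβγ
    have hsplit : v = π v + (v - π v) := by abel
    have e1 : q₁ v = ω (π v) (v - π v) := by
      conv_lhs => rw [hsplit]
      exact hq₁ _ (hπβ v) _ h1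
    have e2 : q₂ (π v) = ω (-(v - π v)) v := by
      have : π v = (-(v - π v)) + v := by abel
      conv_lhs => rw [this]
      exact hq₂ _ (Submodule.neg_mem γ h1) _ hvα
    have e3 : - ω (v - π v) v = ω (π v) (v - π v) := by
      have h := congrArg (ω (v - π v)) hsplit
      rw [map_add, halt, add_zero] at h
      rw [h, ← hskew]
    rw [e1, e2]
    have : ω (-(v - π v)) v = - ω (v - π v) v := by simp
    rw [this, e3]
  -- conclude via sSup
  apply csSup_le_csSup
  · exact ⟨Module.finrank ℝ V, fun k hk => by
      obtain ⟨W, _, hW, _⟩ := hk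
      exact hW ▸ Submodule.finrank_le W⟩
  · exact ⟨0, ⊥, bot_le, by simp, by simp⟩
  · rintro k ⟨W, hWle, hWrank, hWpos⟩
    refine ⟨W.map π, ?_, ?_, ?_⟩
    · rintro w ⟨v, hvW, rfl⟩
      have hv := hWle hvW
      refine ⟨hπβ v, ?_⟩
      have h1 : v - π v ∈ γ := hπγ v hv.2
      have : π v = (-(v - π v)) + v := by abel
      rw [this]
      exact Submodule.add_mem _ (Submodule.mem_sup_left (Submodule.neg_mem γ h1))
        (Submodule.mem_sup_right hv.1)
    · rw [← hWrank]
      have hinj : Function.Injective (π.comp W.subtype) := by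
        rw [← LinearMap.ker_eq_bot]
        rw [Submodule.eq_bot_iff]
        rintro ⟨v, hvW⟩ hker
        have hv0 : π v = 0 := hker
        have : q₂ (π v) = q₁ v := htrans v (hWle hvW)
        rw [hv0, hq₂zero] at this
        have hv : v = 0 := by
          by_contra hne
          exact absurd this.symm (ne_of_gt (hWpos v hvW hne))
        exact Subtype.ext hv
      have : W.map π = LinearMap.range (π.comp W.subtype) := by
        rw [LinearMap.range_comp, Submodule.range_subtype]
      rw [this]
      exact (LinearMap.finrank_range_of_inj hinj)
    · rintro w ⟨v, hvW, rfl⟩ hw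
      have hvne : v ≠ 0 := by rintro rfl; simp at hw
      rw [htrans v (hWle hvW)]
      exact hWpos v hvW hvne


/-- for Lagrangian subspaces `α β γ` of a `2n`-dimensional symplectic space,
the coindex of the quadratic form `Q` is invariant under cyclic permutations:
`n₊ Q(α,β,γ) = n₊ Q(β,γ,α) = n₊ Q(γ,α,β)`.  Here `Q(α,β,γ)` is the quadratic form on
`α ∩ (β + γ)` determined by `v ↦ ω(vβ, vγ)` for `v = vβ + vγ`, `vβ ∈ β`, `vγ ∈ γ`,
represented by a function `q₁` (similarly `q₂`, `q₃` for the cyclic permutations). -/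
theorem coindex_cyclic_invariance {V : Type*} [AddCommGroup V] [Module ℝ V]
    [FiniteDimensional ℝ V] (n : ℕ)
    (ω : V →ₗ[ℝ] V →ₗ[ℝ] ℝ)
    (hdim : Module.finrank ℝ V = 2 * n)
    (halt : ∀ v, ω v v = 0)
    (hnondeg : ∀ v, (∀ w, ω v w = 0) → v = 0)
    (α β γ : Submodule ℝ V)
    (hαiso : ∀ x ∈ α, ∀ y ∈ α, ω x y = 0) (hαdim : Module.finrank ℝ α = n)
    (hβiso : ∀ x ∈ β, ∀ y ∈ β, ω x y = 0) (hβdim : Module.finrank ℝ β = n)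
    (hγiso : ∀ x ∈ γ, ∀ y ∈ γ, ω x y = 0) (hγdim : Module.finrank ℝ γ = n)
    (q₁ q₂ q₃ : V → ℝ)
    (hq₁ : ∀ vβ ∈ β, ∀ vγ ∈ γ, q₁ (vβ + vγ) = ω vβ vγ)
    (hq₂ : ∀ vγ ∈ γ, ∀ vα ∈ α, q₂ (vγ + vα) = ω vγ vα)
    (hq₃ : ∀ vα ∈ α, ∀ vβ ∈ β, q₃ (vα + vβ) = ω vα vβ) :
    posIndex q₁ (α ⊓ (β ⊔ γ)) = posIndex q₂ (β ⊓ (γ ⊔ α)) ∧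
    posIndex q₂ (β ⊓ (γ ⊔ α)) = posIndex q₃ (γ ⊓ (α ⊔ β)) := by
  have h12 := posIndex_key ω halt α β γ q₁ q₂ hq₁ hq₂
  have h23 := posIndex_key ω halt β γ α q₂ q₃ hq₂ hq₃
  have h31 := posIndex_key ω halt γ α β q₃ q₁ hq₃ hq₁
  omega
end

section
/- Let ℓ : [a,b] → Λ(V, ω) be a C¹ path of Lagrangian subspaces and L₀ a fixed Lagrangian subspace such that at every crossing instant t₀ (i.e., every t₀ with ℓ(t₀) ∩ L₀ ≠ {0}) the crossing form Γ(ℓ, L₀, t₀) is non-degenerate. Then the set of crossing instants in [a, b] is finite. -/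
open Matrix

/-- The standard complex structure `J₀ = [[0, -Id], [Id, 0]]` on `ℝ²ⁿ`. -/
noncomputable def J₀ (n : ℕ) : Matrix (Fin n ⊕ Fin n) (Fin n ⊕ Fin n) ℝ :=
  Matrix.fromBlocks 0 (-1) 1 0

/-- The standard symplectic form `ω₀(z, w) = ⟨J₀ z, w⟩` on `ℝ²ⁿ`. -/
noncomputable def ω₀ (n : ℕ) (z w : Fin n ⊕ Fin n → ℝ) : ℝ :=
  (J₀ n).mulVec z ⬝ᵥ w

open Filter Topology

/-!
A crossing is isolated. If crossings `s k → t₀` (`s k ≠ t₀`) carried unit vectors `v k ∈ L` with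
`ψ (s k) v k ∈ L₀`, a subsequence converges to a unit `v₀ ∈ L` with `ψ t₀ v₀ ∈ L₀`, so `t₀` is a
crossing. For `u = ψ t₀ b ∈ ψ t₀ L ∩ L₀`, isotropy of `L₀` and of `L` (transported by the symplectic
`ψ t₀`) gives `ω (ψ (s k) v k, u) = 0 = ω (ψ t₀ v k, u)`; dividing the difference by `s k - t₀` and
passing to the limit yields `ω (ψ' t₀ v₀, u) = 0`, i.e. `ψ t₀ v₀ ≠ 0` lies in the radical of the
crossing form. Compactness of `[a, b]` turns isolatedness into finiteness.
-/

lemma J₀_eq_J (n : ℕ) : J₀ n = J (Fin n) ℝ := rfl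

lemma ω₀_eq_neg_dotProduct {n : ℕ} (x y : Fin n ⊕ Fin n → ℝ) :
    ω₀ n x y = -(x ⬝ᵥ (J₀ n *ᵥ y)) := by
  rw [ω₀, ← vecMul_transpose, ← dotProduct_mulVec, J₀_eq_J, J_transpose, neg_mulVec,
    dotProduct_neg]

lemma ω₀_mulVec_mulVec {n : ℕ} {M : Matrix (Fin n ⊕ Fin n) (Fin n ⊕ Fin n) ℝ}
    (hM : M ∈ symplecticGroup (Fin n) ℝ) (x y : Fin n ⊕ Fin n → ℝ) :
    ω₀ n (M *ᵥ x) (M *ᵥ y) = ω₀ n x y := by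
  rw [SymplecticGroup.mem_iff'] at hM
  rw [ω₀, ω₀, dotProduct_mulVec, ← mulVec_transpose, mulVec_mulVec, mulVec_mulVec,
    J₀_eq_J, hM]

lemma transpose_mul_mul_inv_mulVec_dotProduct {ι : Type*} [Fintype ι] [DecidableEq ι]
    {A B M : Matrix ι ι ℝ} (hM : IsUnit M.det) (v u : ι → ℝ) :
    ((Bᵀ * A * M⁻¹) *ᵥ (M *ᵥ v)) ⬝ᵥ u = (A *ᵥ v) ⬝ᵥ (B *ᵥ u) := by
  rw [mulVec_mulVec, Matrix.mul_assoc, nonsing_inv_mul _ hM, Matrix.mul_one, ← mulVec_mulVec,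
    mulVec_transpose, ← dotProduct_mulVec]

lemma tendsto_slope_of_hasDerivAt_apply {m k : Type*} {ψ : ℝ → Matrix m k ℝ}
    {A : Matrix m k ℝ} {t₀ : ℝ} (h : ∀ i j, HasDerivAt (fun s => ψ s i j) (A i j) t₀) :
    Tendsto (slope ψ t₀) (𝓝[≠] t₀) (𝓝 A) :=
  tendsto_pi_nhds.2 fun i => tendsto_pi_nhds.2 fun j => hasDerivAt_iff_tendsto_slope.1 (h i j)

lemma mulVec_dotProduct_eq_zero_of_tendsto_slope {ι : Type*} [Fintype ι]
    {ψ : ℝ → Matrix ι ι ℝ} {A : Matrix ι ι ℝ} {t₀ : ℝ} {s : ℕ → ℝ} {v : ℕ → ι → ℝ}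
    {v₀ w : ι → ℝ} (hslope : Tendsto (slope ψ t₀) (𝓝[≠] t₀) (𝓝 A))
    (hs : Tendsto s atTop (𝓝[≠] t₀)) (hv : Tendsto v atTop (𝓝 v₀))
    (hmoving : ∀ k, (ψ (s k) *ᵥ v k) ⬝ᵥ w = 0) (hfixed : ∀ k, (ψ t₀ *ᵥ v k) ⬝ᵥ w = 0) :
    (A *ᵥ v₀) ⬝ᵥ w = 0 := by
  have hquot : ∀ k, (slope ψ t₀ (s k) *ᵥ v k) ⬝ᵥ w = 0 := fun k => by
    rw [slope_def_module, smul_mulVec, sub_mulVec, smul_dotProduct, sub_dotProduct, hmoving,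
      hfixed, sub_zero, smul_zero]
  have hpair : Continuous fun p : Matrix ι ι ℝ × (ι → ℝ) => (p.1 *ᵥ p.2) ⬝ᵥ w :=
    (continuous_fst.matrix_mulVec continuous_snd).dotProduct continuous_const
  have hlim := (hpair.tendsto (A, v₀)).comp ((hslope.comp hs).prodMk_nhds hv)
  simp only [Function.comp_def, hquot] at hlim
  exact tendsto_nhds_unique hlim tendsto_const_nhds

lemma exists_norm_eq_one_of_map_inf_ne_bot {E F : Type*} [NormedAddCommGroup E]
    [NormedSpace ℝ E] [AddCommGroup F] [Module ℝ F] {f : E →ₗ[ℝ] F} {L : Submodule ℝ E}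
    {L₀ : Submodule ℝ F} (h : L.map f ⊓ L₀ ≠ ⊥) : ∃ v ∈ L, ‖v‖ = 1 ∧ f v ∈ L₀ := by
  obtain ⟨x, hx, hx0⟩ := Submodule.exists_mem_ne_zero_of_ne_bot h
  obtain ⟨w, hwL, rfl⟩ := Submodule.mem_map.1 (Submodule.mem_inf.1 hx).1
  have hw0 : w ≠ 0 := by rintro rfl; exact hx0 (map_zero f)
  refine ⟨‖w‖⁻¹ • w, L.smul_mem _ hwL, norm_smul_inv_norm hw0, ?_⟩
  rw [map_smul]
  exact L₀.smul_mem _ (Submodule.mem_inf.1 hx).2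

theorem eventually_map_mulVecLin_inf_eq_bot {n : ℕ}
    {ψ : ℝ → Matrix (Fin n ⊕ Fin n) (Fin n ⊕ Fin n) ℝ}
    {A : Matrix (Fin n ⊕ Fin n) (Fin n ⊕ Fin n) ℝ}
    {t₀ : ℝ} (hderiv : ∀ i j, HasDerivAt (fun s => ψ s i j) (A i j) t₀)
    (hsymp : ψ t₀ ∈ symplecticGroup (Fin n) ℝ) {L L₀ : Submodule ℝ (Fin n ⊕ Fin n → ℝ)}
    (hLiso : ∀ x ∈ L, ∀ y ∈ L, ω₀ n x y = 0) (hL₀iso : ∀ x ∈ L₀, ∀ y ∈ L₀, ω₀ n x y = 0)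
    (hreg : L.map (mulVecLin (ψ t₀)) ⊓ L₀ ≠ ⊥ →
      ∀ w ∈ L.map (mulVecLin (ψ t₀)) ⊓ L₀,
        (∀ u ∈ L.map (mulVecLin (ψ t₀)) ⊓ L₀, ((J₀ n)ᵀ * A * (ψ t₀)⁻¹) *ᵥ w ⬝ᵥ u = 0) → w = 0) :
    ∀ᶠ t in 𝓝[≠] t₀, L.map (mulVecLin (ψ t)) ⊓ L₀ = ⊥ := by
  by_contra hnot
  obtain ⟨s, hs, hcross⟩ := frequently_iff_seq_forall.1 (not_eventually.1 hnot)
  choose v hvL hv1 hvL₀ using fun k => exists_norm_eq_one_of_map_inf_ne_bot (hcross k)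
  obtain ⟨v₀, hv₀1, φ, hφ, hv⟩ := (isCompact_sphere (0 : Fin n ⊕ Fin n → ℝ) 1).tendsto_subseq
    fun k => mem_sphere_zero_iff_norm.2 (hv1 k)
  have hsφ : Tendsto (s ∘ φ) atTop (𝓝[≠] t₀) := hs.comp hφ.tendsto_atTop
  have hψ : ContinuousAt ψ t₀ :=
    continuousAt_pi.2 fun i => continuousAt_pi.2 fun j => (hderiv i j).continuousAt
  have hv₀L : v₀ ∈ L :=
    L.closed_of_finiteDimensional.mem_of_tendsto hv (.of_forall fun k => hvL (φ k))
  have hψv : Tendsto (fun k => ψ (s (φ k)) *ᵥ v (φ k)) atTop (𝓝 (ψ t₀ *ᵥ v₀)) :=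
    ((continuous_fst.matrix_mulVec continuous_snd).tendsto (ψ t₀, v₀)).comp
      ((hψ.tendsto.comp (tendsto_nhds_of_tendsto_nhdsWithin hsφ)).prodMk_nhds hv)
  have hψv₀L₀ : ψ t₀ *ᵥ v₀ ∈ L₀ :=
    L₀.closed_of_finiteDimensional.mem_of_tendsto hψv (.of_forall fun k => hvL₀ (φ k))
  have hψv₀K : ψ t₀ *ᵥ v₀ ∈ L.map (mulVecLin (ψ t₀)) ⊓ L₀ :=
    Submodule.mem_inf.2 ⟨Submodule.mem_map_of_mem hv₀L, hψv₀L₀⟩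
  have hunit := SymplecticGroup.symplectic_det hsymp
  have hψv₀ : ψ t₀ *ᵥ v₀ ≠ 0 := by
    have hinj := mulVec_injective_iff_isUnit.2 ((isUnit_iff_isUnit_det _).2 hunit)
    simpa using hinj.ne (ne_zero_of_mem_unit_sphere ⟨v₀, hv₀1⟩)
  refine hψv₀ (hreg (Submodule.ne_bot_iff _ |>.2 ⟨_, hψv₀K, hψv₀⟩) _ hψv₀K fun u hu => ?_)
  obtain ⟨b, hb, rfl⟩ := Submodule.mem_map.1 (Submodule.mem_inf.1 hu).1
  rw [transpose_mul_mul_inv_mulVec_dotProduct hunit]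
  refine mulVec_dotProduct_eq_zero_of_tendsto_slope (tendsto_slope_of_hasDerivAt_apply hderiv)
    hsφ hv (fun k => ?_) (fun k => ?_)
  · rw [← neg_eq_zero, ← ω₀_eq_neg_dotProduct]
    exact hL₀iso _ (hvL₀ _) _ (Submodule.mem_inf.1 hu).2
  · rw [← neg_eq_zero, ← ω₀_eq_neg_dotProduct, mulVecLin_apply, ω₀_mulVec_mulVec hsymp]
    exact hLiso _ (hvL _) _ hb

theorem regular_crossings_finite_general {n : ℕ} (a b : ℝ)
    (ψ ψ' : ℝ → Matrix (Fin n ⊕ Fin n) (Fin n ⊕ Fin n) ℝ)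
    (hderiv : ∀ i j, ∀ t, HasDerivAt (fun s => ψ s i j) (ψ' t i j) t)
    (hsymp : ∀ t, (ψ t)ᵀ * J₀ n * ψ t = J₀ n)
    (L L₀ : Submodule ℝ (Fin n ⊕ Fin n → ℝ))
    (hLiso : ∀ x ∈ L, ∀ y ∈ L, ω₀ n x y = 0)
    (hL₀iso : ∀ x ∈ L₀, ∀ y ∈ L₀, ω₀ n x y = 0)
    (hreg : ∀ t₀ ∈ Set.Icc a b,
      L.map (Matrix.mulVecLin (ψ t₀)) ⊓ L₀ ≠ ⊥ →
      ∀ w ∈ L.map (Matrix.mulVecLin (ψ t₀)) ⊓ L₀,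
        (∀ u ∈ L.map (Matrix.mulVecLin (ψ t₀)) ⊓ L₀,
          ((J₀ n)ᵀ * ψ' t₀ * (ψ t₀)⁻¹).mulVec w ⬝ᵥ u = 0) → w = 0) :
    {t ∈ Set.Icc a b | L.map (Matrix.mulVecLin (ψ t)) ⊓ L₀ ≠ ⊥}.Finite := by
  have hisolated : {t | L.map (mulVecLin (ψ t)) ⊓ L₀ = ⊥} ∈ codiscreteWithin (Set.Icc a b) :=
    mem_codiscreteWithin_iff_forall_mem_nhdsNE.2 fun t₀ ht₀ =>
      (eventually_map_mulVecLin_inf_eq_bot (fun i j => hderiv i j t₀)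
        (SymplecticGroup.mem_iff'.2 (hsymp t₀)) hLiso hL₀iso (hreg t₀ ht₀)).mono
        fun _ ht => Or.inl ht
  exact isCompact_Icc.finite_sdiff_of_mem_codiscreteWithin hisolated

/-- let `ℓ(t) = ψ(t) L` be a `C¹` path of Lagrangian subspaces (given by a
`C¹` path `ψ` of symplectic matrices acting on a Lagrangian `L`) and `L₀` a fixed
Lagrangian.  If at every crossing instant `t₀` (i.e. `ℓ(t₀) ∩ L₀ ≠ {0}`) the crossing form
`Γ(ℓ, L₀, t₀)(w) = ⟨J₀ᵀ ψ'(t₀) ψ(t₀)⁻¹ w, w⟩` is non-degenerate on `ℓ(t₀) ∩ L₀`, then the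
set of crossing instants in `[a,b]` is finite. -/
theorem regular_crossings_finite {n : ℕ} (a b : ℝ)
    (ψ ψ' : ℝ → Matrix (Fin n ⊕ Fin n) (Fin n ⊕ Fin n) ℝ)
    (hderiv : ∀ i j, ∀ t, HasDerivAt (fun s => ψ s i j) (ψ' t i j) t)
    (hC1 : ∀ i j, Continuous fun t => ψ' t i j)
    (hsymp : ∀ t, (ψ t)ᵀ * J₀ n * ψ t = J₀ n)
    (L L₀ : Submodule ℝ (Fin n ⊕ Fin n → ℝ))
    (hLiso : ∀ x ∈ L, ∀ y ∈ L, ω₀ n x y = 0) (hLdim : Module.finrank ℝ L = n)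
    (hL₀iso : ∀ x ∈ L₀, ∀ y ∈ L₀, ω₀ n x y = 0) (hL₀dim : Module.finrank ℝ L₀ = n)
    (hreg : ∀ t₀ ∈ Set.Icc a b,
      L.map (Matrix.mulVecLin (ψ t₀)) ⊓ L₀ ≠ ⊥ →
      ∀ w ∈ L.map (Matrix.mulVecLin (ψ t₀)) ⊓ L₀,
        (∀ u ∈ L.map (Matrix.mulVecLin (ψ t₀)) ⊓ L₀,
          ((J₀ n)ᵀ * ψ' t₀ * (ψ t₀)⁻¹).mulVec w ⬝ᵥ u = 0) → w = 0) :
    {t ∈ Set.Icc a b | L.map (Matrix.mulVecLin (ψ t)) ⊓ L₀ ≠ ⊥}.Finite :=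
  regular_crossings_finite_general a b ψ ψ' hderiv hsymp L L₀ hLiso hL₀iso hreg
end
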